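/- The expansion C₁(z₁I−A₁₁)^{-1}A₁₂(z₂I−A₂₂)^{-1}B₂ with A₁₁, A₂₂ the shift matrices, C₁ = [0...0 I], B₂ = [0;...;0;I], and (A₁₂)_{k,ℓ} = K[r₁+1−k, r₂+1−ℓ], equals ∑_{j₁=1}^{r₁}∑_{j₂=1}^{r₂} K[j₁,j₂] z₁^{−j₁} z₂^{−j₂}. -/

import Mathlib

/-!
Both shifts are nilpotent, so the resolvents are finite Neumann series
`(z • 1 - A)⁻¹ = ∑_{k < r} z⁻¹ ^ (k + 1) • A ^ k`. The coefficient of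
`z₁⁻¹ ^ (k + 1) z₂⁻¹ ^ (l + 1)` is then the Markov parameter `C₁ A₁₁ ^ k A₁₂ A₂₂ ^ l B₂`:
the powers of the shifts move the last block row and column selected by `C₁` and `B₂` to
block `(r₁ - 1 - k, r₂ - 1 - l)` of `A₁₂`, which is `K (k + 1) (l + 1)`.
-/

open Matrix Finset

theorem Finset.sum_Icc_one_eq_sum_range {M : Type*} [AddCommMonoid M] (r : ℕ) (f : ℕ → M) :
    ∑ j ∈ Icc 1 r, f j = ∑ k ∈ range r, f (k + 1) := by
  rw [range_eq_Ico, sum_Ico_add', Ico_add_one_right_eq_Icc, zero_add]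

namespace Matrix

variable {R ι α : Type*} {n : ℕ} [Fintype ι] [DecidableEq ι]

theorem inv_smul_one_sub_eq_sum_of_pow_eq_zero {K m : Type*} [Field K] [Fintype m]
    [DecidableEq m] {N : Matrix m m K} (hN : N ^ n = 0) {z : K} (hz : z ≠ 0) :
    (z • 1 - N)⁻¹ = ∑ k ∈ range n, z⁻¹ ^ (k + 1) • N ^ k := by
  apply inv_eq_right_inv
  have hfactor : z • 1 - N = z • (1 - z⁻¹ • N) := by
    rw [smul_sub, smul_smul, mul_inv_cancel₀ hz, one_smul]
  have hseries : ∑ k ∈ range n, z⁻¹ ^ (k + 1) • N ^ k = z⁻¹ • ∑ k ∈ range n, (z⁻¹ • N) ^ k := by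
    simp only [smul_sum, smul_pow, smul_smul, pow_succ']
  rw [hfactor, hseries, smul_mul_smul_comm, mul_neg_geom_sum, smul_pow, hN, smul_zero, sub_zero,
    mul_inv_cancel₀ hz, one_smul]

theorem one_submatrix_mul_mul_one_submatrix {l m o p : Type*} [Fintype m] [Fintype o]
    [DecidableEq m] [DecidableEq o] [Semiring R] (f : l → m) (g : p → o) (M : Matrix m o R) :
    (1 : Matrix m m R).submatrix f id * M * (1 : Matrix o o R).submatrix id g = M.submatrix f g :=
  (congrArg (· * _) (one_submatrix_mul f (Equiv.refl m) M)).trans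
    (mul_submatrix_one (Equiv.refl o) g _)

def blockShift (R : Type*) [Zero R] [One R] (n : ℕ) (ι : Type*) [DecidableEq ι] :
    Matrix (Fin n × ι) (Fin n × ι) R :=
  of fun p q => if (p.1 : ℕ) = q.1 + 1 ∧ p.2 = q.2 then 1 else 0

theorem blockShift_mul_apply [Semiring R] (M : Matrix (Fin n × ι) α R) (i : Fin n) (a : ι)
    (x : α) :
    (blockShift R n ι * M) (i, a) x =
      if h : 1 ≤ (i : ℕ) then M (⟨i - 1, by omega⟩, a) x else 0 := by
  rw [mul_apply]
  split_ifs with h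
  · rw [sum_eq_single (⟨i - 1, by omega⟩, a)]
    · rw [blockShift, of_apply, if_pos ⟨by dsimp only; omega, rfl⟩, one_mul]
    · rintro ⟨j, b⟩ - hne
      simp only [blockShift, of_apply, ite_mul, one_mul, zero_mul, ite_eq_right_iff, and_imp]
      rintro hj rfl
      exact (hne (Prod.ext (Fin.ext (by dsimp only; omega)) rfl)).elim
    · simp
  · refine sum_eq_zero fun q _ => ?_
    simp only [blockShift, of_apply, ite_mul, one_mul, zero_mul, ite_eq_right_iff, and_imp]
    omega

theorem blockShift_pow_mul_apply [Semiring R] (k : ℕ) (M : Matrix (Fin n × ι) α R) (i : Fin n)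
    (a : ι) (x : α) :
    (blockShift R n ι ^ k * M) (i, a) x =
      if h : k ≤ (i : ℕ) then M (⟨i - k, by omega⟩, a) x else 0 := by
  induction k generalizing i with
  | zero => simp
  | succ k ih =>
    rw [pow_succ', Matrix.mul_assoc, blockShift_mul_apply]
    split_ifs with h₁ h₂ h₂
    · rw [ih, dif_pos (by dsimp only; omega)]
      congr 3
      dsimp only
      omega
    · rw [ih, dif_neg (by dsimp only; omega)]
    · omega
    · rfl

theorem blockShift_pow_self [Semiring R] : blockShift R n ι ^ n = 0 := by
  ext ⟨i, a⟩ x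
  simpa [i.is_lt.not_ge] using blockShift_pow_mul_apply (R := R) n 1 i a x

theorem mul_transpose_blockShift_pow_apply [CommSemiring R] (k : ℕ) (M : Matrix α (Fin n × ι) R)
    (x : α) (j : Fin n) (b : ι) :
    (M * (blockShift R n ι ^ k)ᵀ) x (j, b) =
      if h : k ≤ (j : ℕ) then M x (⟨j - k, by omega⟩, b) else 0 := by
  rw [← transpose_transpose M, ← transpose_mul, transpose_apply, blockShift_pow_mul_apply]
  rfl

theorem blockShift_pow_mul_mul_transpose_blockShift_pow_apply [CommSemiring R] {m : ℕ}
    {κ : Type*} [Fintype κ] [DecidableEq κ] (M : Matrix (Fin n × ι) (Fin m × κ) R) {k l : ℕ}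
    {i : Fin n} {j : Fin m} (hk : k ≤ i) (hl : l ≤ j) (a : ι) (b : κ) :
    (blockShift R n ι ^ k * M * (blockShift R m κ ^ l)ᵀ) (i, a) (j, b) =
      M (⟨i - k, by omega⟩, a) (⟨j - l, by omega⟩, b) := by
  rw [mul_transpose_blockShift_pow_apply, dif_pos hl, blockShift_pow_mul_apply, dif_pos hk]

end Matrix

theorem markov_parameter_eq {r₁ r₂ cin cout : ℕ} {R : Type*} [CommSemiring R]
    (K : ℕ → ℕ → Matrix (Fin cout) (Fin cin) R)
    (A₁₂ : Matrix (Fin r₁ × Fin cout) (Fin r₂ × Fin cin) R)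
    (B₂ : Matrix (Fin r₂ × Fin cin) (Fin cin) R) (C₁ : Matrix (Fin cout) (Fin r₁ × Fin cout) R)
    (hA₁₂ : ∀ p q, A₁₂ p q = K (r₁ - (p.1 : ℕ)) (r₂ - (q.1 : ℕ)) p.2 q.2)
    (hB₂ : ∀ p c, B₂ p c = if (p.1 : ℕ) = r₂ - 1 ∧ p.2 = c then 1 else 0)
    (hC₁ : ∀ o p, C₁ o p = if (p.1 : ℕ) = r₁ - 1 ∧ o = p.2 then 1 else 0)
    {k l : ℕ} (hk : k < r₁) (hl : l < r₂) :
    C₁ * blockShift R r₁ (Fin cout) ^ k * A₁₂ * (blockShift R r₂ (Fin cin) ^ l)ᵀ * B₂ =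
      K (k + 1) (l + 1) := by
  have hC₁' :
      C₁ = (1 : Matrix _ _ R).submatrix (fun o => ((⟨r₁ - 1, by omega⟩ : Fin r₁), o)) id := by
    ext; simp [hC₁, one_apply, Prod.ext_iff, Fin.ext_iff, eq_comm]
  have hB₂' :
      B₂ = (1 : Matrix _ _ R).submatrix id (fun c => ((⟨r₂ - 1, by omega⟩ : Fin r₂), c)) := by
    ext; simp [hB₂, one_apply, Prod.ext_iff, Fin.ext_iff]
  ext o c
  rw [Matrix.mul_assoc C₁, Matrix.mul_assoc C₁, hC₁', hB₂',
    one_submatrix_mul_mul_one_submatrix, submatrix_apply,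
    blockShift_pow_mul_mul_transpose_blockShift_pow_apply _ (by dsimp only; omega)
      (by dsimp only; omega), hA₁₂]
  congr 2 <;> dsimp only <;> omega

theorem stmt15_general (r₁ r₂ cin cout : ℕ)
    (K : ℕ → ℕ → Matrix (Fin cout) (Fin cin) ℝ)
    (A₁₁ : Matrix (Fin r₁ × Fin cout) (Fin r₁ × Fin cout) ℝ)
    (A₁₂ : Matrix (Fin r₁ × Fin cout) (Fin r₂ × Fin cin) ℝ)
    (A₂₂ : Matrix (Fin r₂ × Fin cin) (Fin r₂ × Fin cin) ℝ)
    (B₂ : Matrix (Fin r₂ × Fin cin) (Fin cin) ℝ)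
    (C₁ : Matrix (Fin cout) (Fin r₁ × Fin cout) ℝ)
    (hA₁₁ : ∀ p q, A₁₁ p q = if (p.1 : ℕ) = (q.1 : ℕ) + 1 ∧ p.2 = q.2 then 1 else 0)
    (hA₁₂ : ∀ p q, A₁₂ p q = K (r₁ - (p.1 : ℕ)) (r₂ - (q.1 : ℕ)) p.2 q.2)
    (hA₂₂ : ∀ p q, A₂₂ p q = if (q.1 : ℕ) = (p.1 : ℕ) + 1 ∧ p.2 = q.2 then 1 else 0)
    (hB₂ : ∀ p c, B₂ p c = if (p.1 : ℕ) = r₂ - 1 ∧ p.2 = c then 1 else 0)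
    (hC₁ : ∀ o p, C₁ o p = if (p.1 : ℕ) = r₁ - 1 ∧ o = p.2 then 1 else 0)
    (z₁ z₂ : ℝ) (hz₁ : z₁ ≠ 0) (hz₂ : z₂ ≠ 0) :
    C₁ * (z₁ • 1 - A₁₁)⁻¹ * A₁₂ * (z₂ • 1 - A₂₂)⁻¹ * B₂ =
      ∑ j₁ ∈ Finset.Icc 1 r₁, ∑ j₂ ∈ Finset.Icc 1 r₂,
        (z₁⁻¹ ^ j₁ * z₂⁻¹ ^ j₂) • K j₁ j₂ := by
  have hA₁₁' : A₁₁ = blockShift ℝ r₁ (Fin cout) := by ext; simp [blockShift, hA₁₁]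
  have hA₂₂' : A₂₂ = (blockShift ℝ r₂ (Fin cin))ᵀ := by ext; simp [blockShift, hA₂₂, eq_comm]
  rw [inv_smul_one_sub_eq_sum_of_pow_eq_zero (by rw [hA₁₁', blockShift_pow_self]) hz₁,
    inv_smul_one_sub_eq_sum_of_pow_eq_zero
      (by rw [hA₂₂', ← transpose_pow, blockShift_pow_self, transpose_zero]) hz₂]
  simp only [Matrix.mul_sum, Matrix.sum_mul, Matrix.mul_smul, Matrix.smul_mul, smul_sum,
    smul_smul, sum_Icc_one_eq_sum_range]
  rw [sum_comm]
  refine sum_congr rfl fun k hk => sum_congr rfl fun l hl => ?_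
  rw [hA₁₁', hA₂₂', ← transpose_pow,
    markov_parameter_eq K A₁₂ B₂ C₁ hA₁₂ hB₂ hC₁ (mem_range.1 hk) (mem_range.1 hl), mul_comm]

/-- The cross term C₁(z₁I−A₁₁)⁻¹A₁₂(z₂I−A₂₂)⁻¹B₂ of the Theorem 1 realization equals
∑_{j₁=1}^{r₁}∑_{j₂=1}^{r₂} K[j₁,j₂] z₁^{−j₁} z₂^{−j₂}. -/
theorem stmt15 (r₁ r₂ cin cout : ℕ) (hr₁ : 0 < r₁) (hr₂ : 0 < r₂)
    (K : ℕ → ℕ → Matrix (Fin cout) (Fin cin) ℝ)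
    (A₁₁ : Matrix (Fin r₁ × Fin cout) (Fin r₁ × Fin cout) ℝ)
    (A₁₂ : Matrix (Fin r₁ × Fin cout) (Fin r₂ × Fin cin) ℝ)
    (A₂₂ : Matrix (Fin r₂ × Fin cin) (Fin r₂ × Fin cin) ℝ)
    (B₂ : Matrix (Fin r₂ × Fin cin) (Fin cin) ℝ)
    (C₁ : Matrix (Fin cout) (Fin r₁ × Fin cout) ℝ)
    (hA₁₁ : ∀ p q, A₁₁ p q = if (p.1 : ℕ) = (q.1 : ℕ) + 1 ∧ p.2 = q.2 then 1 else 0)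
    (hA₁₂ : ∀ p q, A₁₂ p q = K (r₁ - (p.1 : ℕ)) (r₂ - (q.1 : ℕ)) p.2 q.2)
    (hA₂₂ : ∀ p q, A₂₂ p q = if (q.1 : ℕ) = (p.1 : ℕ) + 1 ∧ p.2 = q.2 then 1 else 0)
    (hB₂ : ∀ p c, B₂ p c = if (p.1 : ℕ) = r₂ - 1 ∧ p.2 = c then 1 else 0)
    (hC₁ : ∀ o p, C₁ o p = if (p.1 : ℕ) = r₁ - 1 ∧ o = p.2 then 1 else 0)
    (z₁ z₂ : ℝ) (hz₁ : z₁ ≠ 0) (hz₂ : z₂ ≠ 0) :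
    C₁ * (z₁ • 1 - A₁₁)⁻¹ * A₁₂ * (z₂ • 1 - A₂₂)⁻¹ * B₂ =
      ∑ j₁ ∈ Finset.Icc 1 r₁, ∑ j₂ ∈ Finset.Icc 1 r₂,
        (z₁⁻¹ ^ j₁ * z₂⁻¹ ^ j₂) • K j₁ j₂ :=
  stmt15_general r₁ r₂ cin cout K A₁₁ A₁₂ A₂₂ B₂ C₁ hA₁₁ hA₁₂ hA₂₂ hB₂ hC₁ z₁ z₂ hz₁ hz₂
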